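/- Brahmagupta's formula: the area A of a cyclic quadrilateral with side lengths x, y, u, v satisfies A = √((s−x)(s−y)(s−u)(s−v)) where s = (x+y+u+v)/2. -/

import Mathlib

open EuclideanGeometry Real

/-- The area of the triangle `P Q R` in the plane: half the absolute value of
the cross product of the edge vectors. -/
noncomputable def triangleArea (P Q R : EuclideanSpace ℝ (Fin 2)) : ℝ :=
  |(Q - P) 0 * (R - P) 1 - (Q - P) 1 * (R - P) 0| / 2

lemma cross_abs (x y : EuclideanSpace ℝ (Fin 2)) :
    |x 0 * y 1 - x 1 * y 0| =
      Real.sqrt (inner ℝ x x * inner ℝ y y - inner ℝ x y * inner ℝ x y : ℝ) := by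
  rw [← Real.sqrt_sq_eq_abs]
  congr 1
  simp [PiLp.inner_apply, RCLike.inner_apply, Fin.sum_univ_two, EuclideanSpace.norm_sq_eq]
  ring

lemma triArea (Pp Q R : EuclideanSpace ℝ (Fin 2)) :
    triangleArea Pp Q R = Real.sin (∠ Q Pp R) * (dist Q Pp * dist R Pp) / 2 := by
  have h := InnerProductGeometry.sin_angle_mul_norm_mul_norm (Q - Pp) (R - Pp)
  rw [triangleArea, cross_abs, EuclideanGeometry.angle, vsub_eq_sub, vsub_eq_sub,
    dist_eq_norm, dist_eq_norm, h]

lemma triangleArea_rot (Pp Q R : EuclideanSpace ℝ (Fin 2)) :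
    triangleArea Pp Q R = triangleArea Q R Pp := by
  simp only [triangleArea, PiLp.sub_apply]
  congr 1
  ring

lemma triangleArea_swap (Pp Q R : EuclideanSpace ℝ (Fin 2)) :
    triangleArea Pp Q R = triangleArea Pp R Q := by
  simp only [triangleArea, PiLp.sub_apply]
  rw [abs_sub_comm]
  congr 2
  ring

lemma abs_split (r c E1 E2 E3 : ℝ) (hr : r < 0) (h1 : E1 = (r - 1) * c)
    (h2 : E2 = -c) (h3 : E3 = r * c) : |E1| / 2 = |E2| / 2 + |E3| / 2 := by
  subst h1 h2 h3
  rw [abs_neg, abs_mul, abs_mul, abs_of_neg hr, abs_of_neg (by linarith : r - 1 < 0)]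
  ring

lemma triangleArea_split {X Y Pp : EuclideanSpace ℝ (Fin 2)} (h : ∠ X Pp Y = π)
    (Z : EuclideanSpace ℝ (Fin 2)) :
    triangleArea X Z Y = triangleArea X Z Pp + triangleArea Pp Z Y := by
  obtain ⟨-, r, hr, hY⟩ := InnerProductGeometry.angle_eq_pi_iff.mp h
  rw [vsub_eq_sub, vsub_eq_sub] at hY
  have h0 : Y 0 = Pp 0 + r * (X 0 - Pp 0) := by
    have := congrArg (fun w : EuclideanSpace ℝ (Fin 2) => w 0) hY
    simp only [PiLp.sub_apply, PiLp.smul_apply, smul_eq_mul] at this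
    linarith
  have h1 : Y 1 = Pp 1 + r * (X 1 - Pp 1) := by
    have := congrArg (fun w : EuclideanSpace ℝ (Fin 2) => w 1) hY
    simp only [PiLp.sub_apply, PiLp.smul_apply, smul_eq_mul] at this
    linarith
  simp only [triangleArea, PiLp.sub_apply, h0, h1]
  exact abs_split r ((Z 0 - Pp 0) * (X 1 - Pp 1) - (Z 1 - Pp 1) * (X 0 - Pp 0)) _ _ _ hr
    (by ring) (by ring) (by ring)

lemma brahmagupta_key {a b c d x y u v s S C : ℝ} (hb : b ≠ 0)
    (hd : a * c = b * d) (hu : u * b = x * c) (hv : v * b = y * a)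
    (hx2 : x * x = a * a + b * b - 2 * a * b * C)
    (hy2 : y * y = b * b + c * c + 2 * b * c * C)
    (hS : S * S = 1 - C * C) (hs : s = (x + y + u + v) / 2) :
    (s - x) * (s - y) * (s - u) * (s - v) =
      (S * (a * b + b * c + a * d + d * c) / 2) ^ 2 := by
  subst hs
  have hb4 : (16 : ℝ) * b ^ 4 ≠ 0 := by positivity
  apply mul_left_cancel₀ hb4
  have G2 : b ^ 2 * (x * y + u * v) = x * y * (b * b + c * a) := by
    linear_combination (v * b) * hu + (x * c) * hv
  have G3 : b ^ 2 * (u * u) = x * x * (c * c) := by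
    linear_combination (u * b + x * c) * hu
  have G4 : b ^ 2 * (v * v) = y * y * (a * a) := by
    linear_combination (v * b + y * a) * hv
  have G6 : b * (a * b + b * c + a * d + d * c) = (a + c) * (b * b + a * c) := by
    linear_combination (-(a + c)) * hd
  calc 16 * b ^ 4 *
        (((x + y + u + v) / 2 - x) * ((x + y + u + v) / 2 - y) *
          ((x + y + u + v) / 2 - u) * ((x + y + u + v) / 2 - v))
      = 4 * (b ^ 2 * (x * y + u * v)) ^ 2 -
          ((b * b) * (x * x) + (b * b) * (y * y) - b ^ 2 * (u * u) - b ^ 2 * (v * v)) ^ 2 := by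
        ring
    _ = 4 * (x * y * (b * b + c * a)) ^ 2 -
          ((b * b) * (x * x) + (b * b) * (y * y) - x * x * (c * c) - y * y * (a * a)) ^ 2 := by
        rw [G2, G3, G4]
    _ = 4 * ((x * x) * (y * y)) * (b * b + c * a) ^ 2 -
          ((x * x) * (b * b - c * c) + (y * y) * (b * b - a * a)) ^ 2 := by ring
    _ = 4 * ((a * a + b * b - 2 * a * b * C) * (b * b + c * c + 2 * b * c * C)) *
            (b * b + c * a) ^ 2 -
          ((a * a + b * b - 2 * a * b * C) * (b * b - c * c) +
            (b * b + c * c + 2 * b * c * C) * (b * b - a * a)) ^ 2 := by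
        rw [hx2, hy2]
    _ = 4 * (S * S) * (b * b) * ((a + c) * (b * b + a * c)) ^ 2 := by
        rw [hS]; ring
    _ = 16 * b ^ 4 * (S * (a * b + b * c + a * d + d * c) / 2) ^ 2 := by
        linear_combination (-4 * (S * S) * (b * b) *
          ((a + c) * (b * b + a * c) + b * (a * b + b * c + a * d + d * c))) * G6


/-- **Brahmagupta's formula**: the area of a cyclic quadrilateral `A B C D`
(concyclic points in this cyclic order, expressed by the diagonals crossing at
a point `P`), computed as the sum of the areas of triangles `A B C` and
`A C D`, equals `√((s−x)(s−y)(s−u)(s−v))` where `x, y, u, v` are the side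
lengths and `s` the semiperimeter. -/
theorem brahmagupta (A B C D P : EuclideanSpace ℝ (Fin 2))
    (hcos : Cospherical ({A, B, C, D} : Set (EuclideanSpace ℝ (Fin 2))))
    (hPAC : ∠ A P C = π) (hPBD : ∠ B P D = π)
    (x y u v s : ℝ)
    (hx : x = dist A B) (hy : y = dist B C)
    (hu : u = dist C D) (hv : v = dist D A)
    (hs : s = (x + y + u + v) / 2) :
    triangleArea A B C + triangleArea A C D =
      Real.sqrt ((s - x) * (s - y) * (s - u) * (s - v)) := by
  have h' : Cospherical ({A, C, B, D} : Set (EuclideanSpace ℝ (Fin 2))) := by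
    rwa [Set.insert_comm B C {D}] at hcos
  have hmul := mul_dist_eq_mul_dist_of_cospherical_of_angle_eq_pi h' hPAC hPBD
  have hbp := left_dist_ne_zero_of_angle_eq_pi hPBD
  -- similar triangle relations
  have h₁ : dist C D = dist C P / dist B P * dist A B := by
    rw [dist_mul_of_eq_angle_of_dist_mul B P A C P D, dist_comm A B]
    · rw [angle_eq_angle_of_angle_eq_pi_of_angle_eq_pi hPBD hPAC, angle_comm]
    all_goals field_simp [mul_comm, hmul]
    all_goals linarith [hmul, mul_comm (dist D P) (dist B P), mul_comm (dist C P) (dist A P)]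
  have h₂ : dist D A = dist A P / dist B P * dist B C := by
    rw [dist_mul_of_eq_angle_of_dist_mul C P B D P A, dist_comm C B]
    · rwa [angle_comm, angle_eq_angle_of_angle_eq_pi_of_angle_eq_pi]; rwa [angle_comm]
    all_goals field_simp [mul_comm, hmul]
    all_goals linarith [hmul, mul_comm (dist D P) (dist B P), mul_comm (dist C P) (dist A P)]
  -- angle facts at P
  have hBPC : ∠ B P A + ∠ B P C = π := angle_add_angle_eq_pi_of_angle_eq_pi B hPAC
  have hAPD : ∠ A P B + ∠ A P D = π := angle_add_angle_eq_pi_of_angle_eq_pi A hPBD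
  have hvert : ∠ A P B = ∠ C P D := angle_eq_angle_of_angle_eq_pi_of_angle_eq_pi hPAC hPBD
  have hsinBPC : Real.sin (∠ B P C) = Real.sin (∠ A P B) := by
    have : ∠ B P C = π - ∠ A P B := by rw [angle_comm A P B]; linarith
    rw [this, Real.sin_pi_sub]
  have hsinAPD : Real.sin (∠ A P D) = Real.sin (∠ A P B) := by
    have : ∠ A P D = π - ∠ A P B := by linarith
    rw [this, Real.sin_pi_sub]
  have hsinDPC : Real.sin (∠ D P C) = Real.sin (∠ A P B) := by
    rw [angle_comm D P C, ← hvert]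
  have hcosBPC : Real.cos (∠ B P C) = -Real.cos (∠ A P B) := by
    have : ∠ B P C = π - ∠ A P B := by rw [angle_comm A P B]; linarith
    rw [this, Real.cos_pi_sub]
  -- areas
  have harea : triangleArea A B C + triangleArea A C D =
      Real.sin (∠ A P B) *
        (dist A P * dist B P + dist B P * dist C P + dist A P * dist D P +
          dist D P * dist C P) / 2 := by
    rw [triangleArea_split hPAC B, triangleArea_swap A C D, triangleArea_split hPAC D,
      ← triangleArea_rot P A B, ← triangleArea_rot P A D, triArea P A B, triArea P B C,
      triArea P A D, triArea P D C, hsinBPC, hsinAPD, hsinDPC]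
    ring
  -- law of cosines
  have hx2 := EuclideanGeometry.law_cos A P B
  have hy2 := EuclideanGeometry.law_cos B P C
  -- apply the key algebraic identity
  have hsin_nonneg : 0 ≤ Real.sin (∠ A P B) :=
    Real.sin_nonneg_of_nonneg_of_le_pi (angle_nonneg _ _ _) (angle_le_pi _ _ _)
  have hkey : (s - x) * (s - y) * (s - u) * (s - v) =
      (Real.sin (∠ A P B) *
        (dist A P * dist B P + dist B P * dist C P + dist A P * dist D P +
          dist D P * dist C P) / 2) ^ 2 := by
    refine brahmagupta_key (a := dist A P) (b := dist B P) (c := dist C P) (d := dist D P)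
      (C := Real.cos (∠ A P B)) hbp ?_ ?_ ?_ ?_ ?_ ?_ hs
    · exact hmul
    · rw [hu, hx, h₁]; field_simp
    · rw [hv, hy, h₂]; field_simp
    · rw [hx]; linear_combination hx2
    · rw [hy]; rw [hcosBPC] at hy2; linear_combination hy2
    · have := Real.sin_sq_add_cos_sq (∠ A P B)
      linear_combination this - (1 : ℝ) * this + (this)
  rw [harea, hkey, Real.sqrt_sq]
  positivity
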